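/- Let X₁,…,Xₙ ∈ Sym⁺(p) and suppose there exist S₀ ∈ Sym⁺(p) with distinct eigenvalues and r ∈ (0, δ(S₀)/3) such that d_SR(X_i, S₀) ≤ r for all i. Then every minimizer of the sample Fréchet function f_n(S) = (1/n)∑ d_SR²(X_i, S) over Sym⁺(p) has p distinct eigenvalues. -/

import Mathlib

open scoped BigOperators
open Matrix

namespace SR

variable {p : ℕ}

/-- Frobenius norm of a matrix. -/
noncomputable def frobNorm (A : Matrix (Fin p) (Fin p) ℝ) : ℝ :=
  Real.sqrt (∑ i, ∑ j, (A i j) ^ 2)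

/-- `U` is a special orthogonal (rotation) matrix. -/
def IsSO (U : Matrix (Fin p) (Fin p) ℝ) : Prop :=
  U * Uᵀ = 1 ∧ U.det = 1

/-- `D` is diagonal with positive diagonal entries. -/
def IsDiagPos (D : Matrix (Fin p) (Fin p) ℝ) : Prop :=
  D.IsDiag ∧ ∀ i, 0 < D i i

/-- `X` is symmetric positive definite. -/
def IsSPD (X : Matrix (Fin p) (Fin p) ℝ) : Prop :=
  X.IsSymm ∧ X.PosDef

/-- Membership in the eigen-decomposition space `M(p) = SO(p) × Diag⁺(p)`. -/
def IsM (m : Matrix (Fin p) (Fin p) ℝ × Matrix (Fin p) (Fin p) ℝ) : Prop :=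
  IsSO m.1 ∧ IsDiagPos m.2

/-- The eigen-composition map `F(U, D) = U D Uᵀ`. -/
def Fmap (m : Matrix (Fin p) (Fin p) ℝ × Matrix (Fin p) (Fin p) ℝ) :
    Matrix (Fin p) (Fin p) ℝ := m.1 * m.2 * m.1ᵀ

/-- `m = (U, D)` is an eigen-decomposition of `X`. -/
def IsEigenDecomp (X : Matrix (Fin p) (Fin p) ℝ)
    (m : Matrix (Fin p) (Fin p) ℝ × Matrix (Fin p) (Fin p) ℝ) : Prop :=
  IsM m ∧ Fmap m = X

/-- Geodesic distance on `SO(p)`: `(1/√2)‖Log (U₂ U₁ᵀ)‖_F`, where `Log` denotes a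
minimal-Frobenius-norm skew-symmetric logarithm. -/
noncomputable def dSO (U₁ U₂ : Matrix (Fin p) (Fin p) ℝ) : ℝ :=
  sInf {x : ℝ | ∃ A : Matrix (Fin p) (Fin p) ℝ, Aᵀ = -A ∧
    NormedSpace.exp A = U₂ * U₁ᵀ ∧ x = (1 / Real.sqrt 2) * frobNorm A}

/-- Geodesic distance on `Diag⁺(p)`: `‖Log D₁ − Log D₂‖_F`. -/
noncomputable def dDiag (D₁ D₂ : Matrix (Fin p) (Fin p) ℝ) : ℝ :=
  Real.sqrt (∑ i, (Real.log (D₁ i i) - Real.log (D₂ i i)) ^ 2)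

/-- Geodesic distance on `M(p)` with weight `k` on the rotation part. -/
noncomputable def dM (k : ℝ)
    (m₁ m₂ : Matrix (Fin p) (Fin p) ℝ × Matrix (Fin p) (Fin p) ℝ) : ℝ :=
  Real.sqrt (k * (dSO m₁.1 m₂.1) ^ 2 + (dDiag m₁.2 m₂.2) ^ 2)

/-- Scaling-rotation distance between SPD matrices. -/
noncomputable def dSR (k : ℝ) (X Y : Matrix (Fin p) (Fin p) ℝ) : ℝ :=
  sInf {x : ℝ | ∃ mX mY, IsEigenDecomp X mX ∧ IsEigenDecomp Y mY ∧ x = dM k mX mY}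

/-- Partial scaling-rotation distance. -/
noncomputable def dPSR (k : ℝ) (X : Matrix (Fin p) (Fin p) ℝ)
    (m : Matrix (Fin p) (Fin p) ℝ × Matrix (Fin p) (Fin p) ℝ) : ℝ :=
  sInf {x : ℝ | ∃ mX, IsEigenDecomp X mX ∧ x = dM k mX m}

/-- `P` is a signed permutation matrix. -/
def IsSignedPermMatrix (P : Matrix (Fin p) (Fin p) ℝ) : Prop :=
  ∃ (π : Equiv.Perm (Fin p)) (ε : Fin p → ℝ),
    (∀ i, ε i = 1 ∨ ε i = -1) ∧ ∀ i j, P i j = ε i * (if i = π j then 1 else 0)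

/-- `P` is an even signed permutation matrix (an element of `G(p)`). -/
def IsEvenSignedPerm (P : Matrix (Fin p) (Fin p) ℝ) : Prop :=
  IsSignedPermMatrix P ∧ P.det = 1

/-- `β_{G(p)}`: the minimal rotation distance from the identity to a nonidentity
even signed permutation matrix. -/
noncomputable def betaG (p : ℕ) : ℝ :=
  sInf {x : ℝ | ∃ h : Matrix (Fin p) (Fin p) ℝ, IsEvenSignedPerm h ∧ h ≠ 1 ∧ x = dSO 1 h}

/-- `S` has a repeated eigenvalue (belongs to a lower stratum). -/
def HasRepeatedEig (S : Matrix (Fin p) (Fin p) ℝ) : Prop :=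
  ∃ m, IsEigenDecomp S m ∧ ¬ Function.Injective (fun i => m.2 i i)

/-- `S` has `p` distinct eigenvalues (belongs to the top stratum). -/
def HasDistinctEigs (S : Matrix (Fin p) (Fin p) ℝ) : Prop :=
  ∃ m, IsEigenDecomp S m ∧ Function.Injective (fun i => m.2 i i)

/-- `δ(S)`: scaling-rotation distance from `S` to the lower strata. -/
noncomputable def deltaFun (k : ℝ) (S : Matrix (Fin p) (Fin p) ℝ) : ℝ :=
  sInf {x : ℝ | ∃ S', IsSPD S' ∧ HasRepeatedEig S' ∧ x = dSR k S S'}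

/-- Diameter of `SO(p)` in the rotation distance. -/
noncomputable def diamSO (p : ℕ) : ℝ :=
  sSup {x : ℝ | ∃ U V : Matrix (Fin p) (Fin p) ℝ, IsSO U ∧ IsSO V ∧ x = dSO U V}

/-!
Two eigendecompositions of the same SPD matrix have the same characteristic polynomial, so
their diagonals agree up to a permutation. Take near-optimal pairs of decompositions
`(X ↦ (U, D), S₀ ↦ (U₀, D₀))` and `(X ↦ (U', D'), S ↦ (V, E))`, and rearrange `E` by the
permutation carrying `D'` to `D`. If `S` has a repeated eigenvalue, so does the point
`(U₀, rearranged E)`, and its distance from `(U₀, D₀)` is purely a scaling distance, at most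
`‖log D₀ - log D‖ + ‖log D' - log E‖`. Hence `δ(S₀) ≤ d_SR(X, S₀) + d_SR(X, S)` for every
SPD `X`. A minimizer `S` of `f_n` is no farther than `S₀` from some `Xᵢ`, so if it lay in a
lower stratum then `δ(S₀) ≤ 2r < 3r`.
-/

theorem _root_.Fintype.exists_equiv_comp_eq_of_map_univ_eq {ι α : Type*} [Fintype ι]
    [DecidableEq α] {f g : ι → α} (h : Finset.univ.val.map f = Finset.univ.val.map g) :
    ∃ σ : ι ≃ ι, ∀ i, g (σ i) = f i := by
  have hcard : ∀ c, Fintype.card {i // f i = c} = Fintype.card {i // g i = c} := fun c => by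
    simpa [Multiset.count_map, Fintype.card_subtype, Finset.card_def, Finset.filter_val, eq_comm]
      using congrArg (Multiset.count c) h
  exact ⟨Equiv.ofFiberEquiv fun c => Fintype.equivOfCardEq (hcard c), Equiv.ofFiberEquiv_map _⟩

variable {k : ℝ}

theorem IsSO.transpose_mul_self {U : Matrix (Fin p) (Fin p) ℝ} (hU : IsSO U) : Uᵀ * U = 1 :=
  mul_eq_one_comm.mp hU.1

theorem IsDiagPos.posDef {D : Matrix (Fin p) (Fin p) ℝ} (hD : IsDiagPos D) : D.PosDef := by
  rw [← hD.1.diagonal_diag]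
  exact Matrix.posDef_diagonal_iff.mpr hD.2

theorem IsM.isSPD_Fmap {m : Matrix (Fin p) (Fin p) ℝ × Matrix (Fin p) (Fin p) ℝ} (hm : IsM m) :
    IsSPD (Fmap m) := by
  have hpos : (m.1 * m.2 * m.1ᵀ).PosDef := by
    simpa using hm.2.posDef.conjTranspose_mul_mul_same (B := m.1ᵀ) fun x y hxy => by
      simpa [hm.1.1] using congrArg (m.1 *ᵥ ·) hxy
  exact ⟨hpos.1, hpos⟩

theorem IsEigenDecomp.roots_charpoly {X : Matrix (Fin p) (Fin p) ℝ}
    {m : Matrix (Fin p) (Fin p) ℝ × Matrix (Fin p) (Fin p) ℝ} (h : IsEigenDecomp X m) :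
    X.charpoly.roots = Finset.univ.val.map fun i => m.2 i i := by
  obtain ⟨⟨hU, hD⟩, rfl⟩ := h
  have hconj : (Fmap m).charpoly = m.2.charpoly := by
    rw [Fmap, Matrix.charpoly_mul_comm, ← Matrix.mul_assoc, hU.transpose_mul_self,
      Matrix.one_mul]
  have hroots := Polynomial.roots_multiset_prod_X_sub_C (Finset.univ.val.map m.2.diag)
  rw [Multiset.map_map] at hroots
  rw [hconj]
  conv_lhs => rw [← hD.1.diagonal_diag]
  rw [Matrix.charpoly_diagonal, Finset.prod_eq_multiset_prod]
  exact hroots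

theorem IsEigenDecomp.exists_perm_diag_eq {X : Matrix (Fin p) (Fin p) ℝ}
    {m₁ m₂ : Matrix (Fin p) (Fin p) ℝ × Matrix (Fin p) (Fin p) ℝ}
    (h₁ : IsEigenDecomp X m₁) (h₂ : IsEigenDecomp X m₂) :
    ∃ σ : Equiv.Perm (Fin p), ∀ i, m₂.2 (σ i) (σ i) = m₁.2 i i :=
  Fintype.exists_equiv_comp_eq_of_map_univ_eq (h₁.roots_charpoly.symm.trans h₂.roots_charpoly)

theorem exists_isSO_conj_diagonal_eq {U : Matrix (Fin p) (Fin p) ℝ} (hU : U * Uᵀ = 1)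
    (d : Fin p → ℝ) : ∃ V, IsSO V ∧ V * Matrix.diagonal d * Vᵀ = U * Matrix.diagonal d * Uᵀ := by
  cases isEmpty_or_nonempty (Fin p) with
  | inl _ => exact ⟨1, ⟨Subsingleton.elim _ _, by simp⟩, Subsingleton.elim _ _⟩
  | inr hne =>
    have hdet : U.det * U.det = 1 := by
      simpa [Matrix.det_mul, Matrix.det_transpose] using congrArg Matrix.det hU
    -- flipping the sign of one column fixes the determinant without changing `U D Uᵀ`
    set ε : Fin p → ℝ := Pi.mulSingle (Classical.arbitrary (Fin p)) U.det
    have hε : ∀ i, ε i * ε i = 1 := fun i => by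
      by_cases hi : i = Classical.arbitrary (Fin p) <;> simp [ε, hi, hdet]
    have hεε : Matrix.diagonal ε * Matrix.diagonal ε = 1 := by
      simp [Matrix.diagonal_mul_diagonal, hε]
    refine ⟨U * Matrix.diagonal ε, ⟨?_, ?_⟩, ?_⟩
    · rw [Matrix.transpose_mul, Matrix.diagonal_transpose, Matrix.mul_assoc,
        ← Matrix.mul_assoc (Matrix.diagonal ε), hεε, Matrix.one_mul, hU]
    · rw [Matrix.det_mul, Matrix.det_diagonal, Finset.prod_pi_mulSingle', if_pos
        (Finset.mem_univ _), hdet]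
    · rw [Matrix.transpose_mul, Matrix.diagonal_transpose, Matrix.mul_assoc U,
        Matrix.diagonal_mul_diagonal, Matrix.mul_assoc, ← Matrix.mul_assoc (Matrix.diagonal _),
        Matrix.diagonal_mul_diagonal, ← Matrix.mul_assoc]
      congr 3
      ext i
      linear_combination d i * hε i

theorem IsSPD.exists_isEigenDecomp {X : Matrix (Fin p) (Fin p) ℝ} (hX : IsSPD X) :
    ∃ m, IsEigenDecomp X m := by
  have hH : X.IsHermitian := hX.2.1
  obtain ⟨V, hV, hVX⟩ := exists_isSO_conj_diagonal_eq
    (U := (hH.eigenvectorUnitary : Matrix (Fin p) (Fin p) ℝ))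
    (by simpa [Matrix.star_eq_conjTranspose] using
      Unitary.mul_star_self_of_mem hH.eigenvectorUnitary.2) hH.eigenvalues
  refine ⟨(V, Matrix.diagonal hH.eigenvalues),
    ⟨hV, Matrix.isDiag_diagonal _, fun i => by simpa using hX.2.eigenvalues_pos i⟩, ?_⟩
  rw [Fmap, hVX]
  conv_rhs => rw [hH.spectral_theorem]
  simp [Unitary.conjStarAlgAut_apply, Matrix.star_eq_conjTranspose]

theorem dSO_self {U : Matrix (Fin p) (Fin p) ℝ} (hU : IsSO U) : dSO U U = 0 := by
  have hnonneg (A : Matrix (Fin p) (Fin p) ℝ) : 0 ≤ 1 / Real.sqrt 2 * frobNorm A :=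
    mul_nonneg (by positivity) (Real.sqrt_nonneg _)
  refine le_antisymm (csInf_le ⟨0, ?_⟩ ⟨0, by simp, by simp [hU.1], by simp [frobNorm]⟩)
    (Real.sInf_nonneg ?_) <;>
  · rintro _ ⟨A, -, -, rfl⟩
    exact hnonneg A

theorem dDiag_comm (D E : Matrix (Fin p) (Fin p) ℝ) : dDiag D E = dDiag E D := by
  simp only [dDiag, ← neg_sub (Real.log (D _ _)), neg_sq]

theorem dDiag_eq_dist (D E : Matrix (Fin p) (Fin p) ℝ) :
    dDiag D E = dist (WithLp.toLp 2 fun i => Real.log (D i i) : EuclideanSpace ℝ (Fin p))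
      (WithLp.toLp 2 fun i => Real.log (E i i)) := by
  simp [dDiag, EuclideanSpace.dist_eq, Real.dist_eq, sq_abs]

theorem dDiag_triangle (D E F : Matrix (Fin p) (Fin p) ℝ) :
    dDiag D F ≤ dDiag D E + dDiag E F := by
  simp only [dDiag_eq_dist]
  exact dist_triangle _ _ _

theorem dDiag_eq_of_perm (σ : Equiv.Perm (Fin p)) {D E D' E' : Matrix (Fin p) (Fin p) ℝ}
    (hD : ∀ i, D' (σ i) (σ i) = D i i) (hE : ∀ i, E' (σ i) (σ i) = E i i) :
    dDiag D E = dDiag D' E' := by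
  simp only [dDiag, ← hD, ← hE]
  rw [Equiv.sum_comp σ fun i => (Real.log (D' i i) - Real.log (E' i i)) ^ 2]

theorem dDiag_le_dM (hk : 0 ≤ k) (m₁ m₂ : Matrix (Fin p) (Fin p) ℝ × Matrix (Fin p) (Fin p) ℝ) :
    dDiag m₁.2 m₂.2 ≤ dM k m₁ m₂ :=
  Real.le_sqrt_of_sq_le (le_add_of_nonneg_left (by positivity))

theorem dM_eq_dDiag_of_fst_eq {m₁ m₂ : Matrix (Fin p) (Fin p) ℝ × Matrix (Fin p) (Fin p) ℝ}
    (hU : IsSO m₁.1) (h : m₁.1 = m₂.1) : dM k m₁ m₂ = dDiag m₁.2 m₂.2 := by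
  rw [dM, ← h, dSO_self hU, sq, mul_zero, mul_zero, zero_add]
  exact Real.sqrt_sq (Real.sqrt_nonneg _)

theorem dSR_nonneg (X Y : Matrix (Fin p) (Fin p) ℝ) : 0 ≤ dSR k X Y :=
  Real.sInf_nonneg fun _ ⟨_, _, _, _, hx⟩ => hx ▸ Real.sqrt_nonneg _

theorem dSR_le_dM {X Y : Matrix (Fin p) (Fin p) ℝ}
    {mX mY : Matrix (Fin p) (Fin p) ℝ × Matrix (Fin p) (Fin p) ℝ}
    (hX : IsEigenDecomp X mX) (hY : IsEigenDecomp Y mY) : dSR k X Y ≤ dM k mX mY :=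
  csInf_le ⟨0, fun _ ⟨_, _, _, _, hx⟩ => hx ▸ Real.sqrt_nonneg _⟩ ⟨mX, mY, hX, hY, rfl⟩

theorem exists_dM_lt_dSR_add {X Y : Matrix (Fin p) (Fin p) ℝ} (hX : IsSPD X) (hY : IsSPD Y)
    {ε : ℝ} (hε : 0 < ε) :
    ∃ mX mY, IsEigenDecomp X mX ∧ IsEigenDecomp Y mY ∧ dM k mX mY < dSR k X Y + ε := by
  obtain ⟨mX, hmX⟩ := hX.exists_isEigenDecomp
  obtain ⟨mY, hmY⟩ := hY.exists_isEigenDecomp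
  have hne : {x : ℝ | ∃ mX mY, IsEigenDecomp X mX ∧ IsEigenDecomp Y mY ∧
      x = dM k mX mY}.Nonempty := ⟨_, mX, mY, hmX, hmY, rfl⟩
  obtain ⟨_, ⟨mX', mY', hX', hY', rfl⟩, hlt⟩ := Real.lt_sInf_add_pos hne hε
  exact ⟨mX', mY', hX', hY', hlt⟩

theorem deltaFun_le_dSR {S S' : Matrix (Fin p) (Fin p) ℝ} (hS' : IsSPD S')
    (hrep : HasRepeatedEig S') : deltaFun k S ≤ dSR k S S' :=
  csInf_le ⟨0, fun _ ⟨_, _, _, hx⟩ => hx ▸ dSR_nonneg _ _⟩ ⟨S', hS', hrep, rfl⟩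

theorem deltaFun_le_dSR_add_dSR (hk : 0 ≤ k) {S₀ X S : Matrix (Fin p) (Fin p) ℝ}
    (hS₀ : IsSPD S₀) (hX : IsSPD X) (hS : IsSPD S) (hS_lwr : ¬ HasDistinctEigs S) :
    deltaFun k S₀ ≤ dSR k X S₀ + dSR k X S := by
  refine le_of_forall_pos_le_add fun ε hε => ?_
  obtain ⟨mX, m₀, hmX, hm₀, hlt₀⟩ := exists_dM_lt_dSR_add (k := k) hX hS₀ (half_pos hε)
  obtain ⟨mX', mS, hmX', hmS, hltS⟩ := exists_dM_lt_dSR_add (k := k) hX hS (half_pos hε)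
  obtain ⟨σ, hσ⟩ := hmX.exists_perm_diag_eq hmX'
  set m : Matrix (Fin p) (Fin p) ℝ × Matrix (Fin p) (Fin p) ℝ :=
    (m₀.1, Matrix.diagonal fun i => mS.2 (σ i) (σ i))
  have hm : IsM m :=
    ⟨hm₀.1.1, Matrix.isDiag_diagonal _, fun i => by simpa [m] using hmS.1.2.2 (σ i)⟩
  have hrep : HasRepeatedEig (Fmap m) := by
    refine ⟨m, ⟨hm, rfl⟩, fun hinj => hS_lwr ⟨mS, hmS, ?_⟩⟩
    exact (EquivLike.injective_comp σ _).mp fun a b h => hinj (by simpa [m] using h)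
  calc deltaFun k S₀ ≤ dSR k S₀ (Fmap m) := deltaFun_le_dSR hm.isSPD_Fmap hrep
    _ ≤ dM k m₀ m := dSR_le_dM hm₀ ⟨hm, rfl⟩
    _ = dDiag m₀.2 m.2 := dM_eq_dDiag_of_fst_eq hm₀.1.1 rfl
    _ ≤ dDiag mX.2 m₀.2 + dDiag mX.2 m.2 := by
      rw [dDiag_comm mX.2]; exact dDiag_triangle _ _ _
    _ = dDiag mX.2 m₀.2 + dDiag mX'.2 mS.2 := by
      rw [dDiag_eq_of_perm σ hσ (E := m.2) (E' := mS.2) fun i => by simp [m]]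
    _ ≤ dM k mX m₀ + dM k mX' mS := add_le_add (dDiag_le_dM hk _ _) (dDiag_le_dM hk _ _)
    _ ≤ dSR k X S₀ + dSR k X S + ε := by linarith

theorem sample_SR_mean_top_general (p : ℕ) (k : ℝ) (hk : 0 < k) (n : ℕ) (hn : 0 < n)
    (X : Fin n → Matrix (Fin p) (Fin p) ℝ) (hX : ∀ i, IsSPD (X i))
    (S₀ : Matrix (Fin p) (Fin p) ℝ) (hS₀ : IsSPD S₀)
    (r : ℝ) (hr : r < deltaFun k S₀ / 3)
    (hball : ∀ i, dSR k (X i) S₀ ≤ r)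
    (S : Matrix (Fin p) (Fin p) ℝ) (hS : IsSPD S)
    (hmin : ∀ S' : Matrix (Fin p) (Fin p) ℝ, IsSPD S' →
      (1 / n : ℝ) * ∑ i, (dSR k (X i) S) ^ 2 ≤ (1 / n : ℝ) * ∑ i, (dSR k (X i) S') ^ 2) :
    HasDistinctEigs S := by
  by_contra hS_lwr
  have hsum : ∑ i, dSR k (X i) S ^ 2 ≤ ∑ i, dSR k (X i) S₀ ^ 2 :=
    le_of_mul_le_mul_left (hmin S₀ hS₀) (by positivity)
  obtain ⟨i, -, hi⟩ := Finset.exists_le_of_sum_le (Finset.univ_nonempty_iff.mpr ⟨⟨0, hn⟩⟩) hsum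
  have hXS : dSR k (X i) S ≤ dSR k (X i) S₀ :=
    (pow_le_pow_iff_left₀ (dSR_nonneg _ _) (dSR_nonneg _ _) two_ne_zero).mp hi
  have hδ := deltaFun_le_dSR_add_dSR hk.le hS₀ (hX i) hS hS_lwr
  linarith [hball i, dSR_nonneg (k := k) (X i) S₀]

/-- if the data lie in a closed `d_SR`-ball of radius `r < δ(S₀)/3`
around a top-stratum point `S₀`, then every minimizer of the sample Fréchet function
`S ↦ (1/n) ∑ d_SR²(X_i, S)` has `p` distinct eigenvalues. -/
theorem sample_SR_mean_top (p : ℕ) (k : ℝ) (hk : 0 < k) (n : ℕ) (hn : 0 < n)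
    (X : Fin n → Matrix (Fin p) (Fin p) ℝ) (hX : ∀ i, IsSPD (X i))
    (S₀ : Matrix (Fin p) (Fin p) ℝ) (hS₀ : IsSPD S₀) (hS₀top : HasDistinctEigs S₀)
    (r : ℝ) (hr0 : 0 < r) (hr : r < deltaFun k S₀ / 3)
    (hball : ∀ i, dSR k (X i) S₀ ≤ r)
    (S : Matrix (Fin p) (Fin p) ℝ) (hS : IsSPD S)
    (hmin : ∀ S' : Matrix (Fin p) (Fin p) ℝ, IsSPD S' →
      (1 / n : ℝ) * ∑ i, (dSR k (X i) S) ^ 2 ≤ (1 / n : ℝ) * ∑ i, (dSR k (X i) S') ^ 2) :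
    HasDistinctEigs S :=
  sample_SR_mean_top_general p k hk n hn X hX S₀ hS₀ r hr hball S hS hmin

end SR
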